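/- arXiv:1807.10514 — 2 statements merged into one kernel-verified Lean document; each statement's English description precedes it below -/
import Mathlib

section
/- For every u ∈ ℝ^V the subdifferential ∂J(u) of the graph total variation is an invariant φ-minimal subset of ℝ^V: for every a ∈ ℝ^V there exists x_a ∈ ∂J(u) such that Σ_{v∈V} φ(x_a(v) − a(v)) ≤ Σ_{v∈V} φ(x(v) − a(v)) for every x ∈ ∂J(u) and every convex function φ : ℝ → ℝ. -/
open Finset MeasureTheory

noncomputable section

/-- The graph total variation `J(u) = ∑_{(v,w) ∈ E} |u(w) - u(v)|`. -/
def tvJ {V : Type*} (E : Finset (V × V)) (u : V → ℝ) : ℝ :=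
  ∑ e ∈ E, |u e.2 - u e.1|

/-- The subdifferential of the graph total variation at `u`. -/
def subdiffJ {V : Type*} [Fintype V] (E : Finset (V × V)) (u : V → ℝ) : Set (V → ℝ) :=
  {us | ∀ h : V → ℝ, (∑ v, (h v - u v) * us v) + tvJ E u ≤ tvJ E h}

/-- The divergence of an edge function `H`:
`(div H)(v) = ∑_{(w,v) ∈ E} H((w,v)) - ∑_{(v,w) ∈ E} H((v,w))`. -/
def gdiv {V : Type*} [DecidableEq V] (E : Finset (V × V)) (H : V × V → ℝ) : V → ℝ :=
  fun v => (∑ e ∈ E, if e.2 = v then H e else 0) - (∑ e ∈ E, if e.1 = v then H e else 0)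

/-- The ℓ² norm on `ℝ^V`. -/
def norm2 {V : Type*} [Fintype V] (u : V → ℝ) : ℝ :=
  Real.sqrt (∑ v, (u v) ^ 2)

/-- `u` minimizes `w ↦ ½‖f - w‖₂² + α J(w)` over `ℝ^V`. -/
def IsROFMinimizer {V : Type*} [Fintype V] (E : Finset (V × V)) (f : V → ℝ) (α : ℝ)
    (u : V → ℝ) : Prop :=
  ∀ w : V → ℝ,
    (1 / 2) * (∑ v, (f v - u v) ^ 2) + α * tvJ E u ≤
      (1 / 2) * (∑ v, (f v - w v) ^ 2) + α * tvJ E w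

/-- `u : [0,∞) → ℝ^V` is a TV flow solution with datum `f`: it is Lipschitz on `[0,∞)`,
`u(0) = f`, and `-u'(t) ∈ ∂J(u(t))` for almost every `t > 0`. -/
def IsTVFlowSolution {V : Type*} [Fintype V] (E : Finset (V × V)) (f : V → ℝ)
    (u : ℝ → V → ℝ) : Prop :=
  u 0 = f ∧ (∃ L : NNReal, LipschitzOnWith L u (Set.Ici 0)) ∧
    ∃ u' : ℝ → V → ℝ, ∀ᵐ t ∂(volume : Measure ℝ), 0 < t →
      HasDerivAt u (u' t) t ∧ (fun v => -(u' t v)) ∈ subdiffJ E (u t)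

/-!
Every subgradient of `J` at `u` is the divergence of a unit edge field `H` calibrating `u`,
i.e. `H e * (u e.2 - u e.1) = |u e.2 - u e.1|` on `E`; this is Hahn–Banach for the compact convex
set of divergences of the unit box. Let `x_a = div G` be the point of `∂J(u)` nearest to `a` in
`ℓ²` and `z = x_a - a`. For the field `H` of any other subgradient `x`, moving `G` towards `H` along
a single edge `e` stays inside `∂J(u)`, so first-order optimality gives
`(H e - G e) * (z e.2 - z e.1) ≥ 0`. This survives replacing `z` by `ψ ∘ z` for monotone `ψ`, and
summing over the edges gives `⟨ψ ∘ z, x - x_a⟩ ≥ 0`. With `ψ` the right derivative of `φ`, the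
subgradient inequality `φ (x v - a v) ≥ φ (z v) + ψ (z v) * (x v - x_a v)` concludes.
-/

theorem sign_comp_mem_Icc {ι : Type*} (d : ι → ℝ) :
    (fun i => (SignType.sign (d i) : ℝ)) ∈ Set.Icc (-1) 1 := by
  constructor <;> intro i <;> rcases lt_trichotomy (d i) 0 with h | h | h <;> simp [h]

theorem mul_le_abs_of_mem_Icc {c : ℝ} (hc : c ∈ Set.Icc (-1) 1) (d : ℝ) : c * d ≤ |d| :=
  calc c * d ≤ |c| * |d| := by rw [← abs_mul]; exact le_abs_self _
    _ ≤ |d| := mul_le_of_le_one_left (abs_nonneg d) (abs_le.2 hc)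

theorem Monotone.mul_sub_nonneg {ψ : ℝ → ℝ} (hψ : Monotone ψ) {c a b : ℝ}
    (h : 0 ≤ c * (b - a)) : 0 ≤ c * (ψ b - ψ a) := by
  rcases lt_trichotomy a b with hab | rfl | hab
  · exact mul_nonneg (nonneg_of_mul_nonneg_left h (sub_pos.2 hab)) (sub_nonneg.2 (hψ hab.le))
  · simp
  · exact mul_nonneg_of_nonpos_of_nonpos (nonpos_of_mul_nonneg_left h (sub_neg.2 hab))
      (sub_nonpos.2 (hψ hab.le))

theorem ConvexOn.add_rightDeriv_mul_sub_le {φ : ℝ → ℝ} (hφ : ConvexOn ℝ Set.univ φ) (x y : ℝ) :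
    φ x + derivWithin φ (Set.Ioi x) x * (y - x) ≤ φ y := by
  rcases lt_trichotomy x y with hxy | rfl | hxy
  · have h := hφ.rightDeriv_le_slope_of_mem_interior (by simp) (Set.mem_univ y) hxy
    rw [slope_def_field, le_div_iff₀ (sub_pos.2 hxy)] at h
    linarith
  · simp
  · have h := (hφ.slope_le_leftDeriv_of_mem_interior (Set.mem_univ y) (by simp) hxy).trans
      (hφ.leftDeriv_le_rightDeriv_of_mem_interior (by simp))
    rw [slope_def_field, div_le_iff₀ (sub_pos.2 hxy)] at h
    linarith

theorem sum_mul_nonneg_of_forall_sum_sq_le {ι : Type*} [Fintype ι] (z w : ι → ℝ)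
    (h : ∀ t ∈ Set.Icc (0 : ℝ) 1, ∑ i, z i ^ 2 ≤ ∑ i, (z i + t * w i) ^ 2) :
    0 ≤ ∑ i, z i * w i := by
  set A := ∑ i, z i * w i
  set B := ∑ i, w i ^ 2
  have hB : 0 ≤ B := Finset.sum_nonneg fun i _ => sq_nonneg (w i)
  have hexp : ∀ t, ∑ i, (z i + t * w i) ^ 2 = ∑ i, z i ^ 2 + (2 * t * A + t ^ 2 * B) := by
    intro t
    rw [Finset.mul_sum, Finset.mul_sum, ← Finset.sum_add_distrib, ← Finset.sum_add_distrib]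
    exact Finset.sum_congr rfl fun i _ => by ring
  by_contra hA
  push Not at hA
  -- the quadratic `2 t A + t² B` is negative at `t = -A / (B - A) ∈ (0, 1)`
  set t := -A / (B - A)
  have hBA : 0 < B - A := by linarith
  have ht : t ∈ Set.Icc (0 : ℝ) 1 :=
    ⟨div_nonneg (by linarith) hBA.le, (div_le_one hBA).2 (by linarith)⟩
  have htB : t * (B - A) = -A := div_mul_cancel₀ _ hBA.ne'
  have hquad := h t ht
  rw [hexp] at hquad
  have ht0 : 0 < t := div_pos (by linarith) hBA
  have hfactor : 2 * t * A + t ^ 2 * B = t * (1 + t) * A := by linear_combination t * htB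
  nlinarith [mul_pos ht0 (by linarith : 0 < 1 + t)]

theorem tvJ_add_le {V : Type*} (E : Finset (V × V)) (u h : V → ℝ) :
    tvJ E (u + h) ≤ tvJ E u + tvJ E h := by
  rw [tvJ, tvJ, tvJ, ← Finset.sum_add_distrib]
  refine Finset.sum_le_sum fun e _ => ?_
  simpa only [Pi.add_apply, add_sub_add_comm] using abs_add_le _ _

theorem tvJ_smul {V : Type*} (E : Finset (V × V)) (c : ℝ) (u : V → ℝ) :
    tvJ E (c • u) = |c| * tvJ E u := by
  simp only [tvJ, Pi.smul_apply, smul_eq_mul, ← mul_sub, abs_mul, Finset.mul_sum]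

section Subdifferential

variable {V : Type*} [Fintype V] (E : Finset (V × V))

theorem mem_subdiffJ_iff {u p : V → ℝ} :
    p ∈ subdiffJ E u ↔ (∀ g, ∑ v, g v * p v ≤ tvJ E g) ∧ ∑ v, u v * p v = tvJ E u := by
  simp only [subdiffJ, Set.mem_ofPred_eq, sub_mul, Finset.sum_sub_distrib]
  constructor
  · intro hp
    have hle : tvJ E u ≤ ∑ v, u v * p v := by
      have h0 : tvJ E 0 = 0 := by simp [tvJ]
      simpa [h0] using hp 0
    have hge : ∑ v, u v * p v ≤ tvJ E u := by
      have := hp ((2 : ℝ) • u)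
      simp only [tvJ_smul, Pi.smul_apply, smul_eq_mul, mul_assoc, ← Finset.mul_sum] at this
      norm_num at this
      linarith
    refine ⟨fun g => ?_, le_antisymm hge hle⟩
    have := (hp (u + g)).trans (tvJ_add_le E u g)
    simp only [Pi.add_apply, add_mul, Finset.sum_add_distrib] at this
    linarith
  · rintro ⟨hdual, hu⟩ h
    linarith [hdual h]

theorem isClosed_subdiffJ (u : V → ℝ) : IsClosed (subdiffJ E u) := by
  simp only [subdiffJ, Set.ofPred_forall]
  exact isClosed_iInter fun h => isClosed_le (by fun_prop) continuous_const

variable [DecidableEq V]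

theorem sum_mul_gdiv (H : V × V → ℝ) (g : V → ℝ) :
    ∑ v, g v * gdiv E H v = ∑ e ∈ E, H e * (g e.2 - g e.1) := by
  simp only [gdiv, mul_sub, Finset.sum_sub_distrib, Finset.mul_sum, mul_ite, mul_zero]
  rw [Finset.sum_comm, Finset.sum_comm (s := Finset.univ)]
  simp only [Finset.sum_ite_eq, Finset.mem_univ, if_true, ← Finset.sum_sub_distrib]
  exact Finset.sum_congr rfl fun e _ => by ring

theorem sum_mul_gdiv_sub (H G : V × V → ℝ) (g : V → ℝ) :
    ∑ v, g v * (gdiv E H v - gdiv E G v) = ∑ e ∈ E, (H e - G e) * (g e.2 - g e.1) := by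
  simp only [mul_sub, Finset.sum_sub_distrib, sum_mul_gdiv, sub_mul]
  ring

theorem sum_mul_gdiv_single (g : V → ℝ) {e : V × V} (he : e ∈ E) (c : ℝ) :
    ∑ v, g v * gdiv E (Pi.single e c) v = c * (g e.2 - g e.1) := by
  rw [sum_mul_gdiv, Finset.sum_eq_single_of_mem e he fun e' _ hne => by simp [hne]]
  simp

def gdivₗ : (V × V → ℝ) →ₗ[ℝ] V → ℝ where
  toFun := gdiv E
  map_add' H G := by
    ext v
    simp only [gdiv, Pi.add_apply, ite_add_zero, Finset.sum_add_distrib]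
    ring
  map_smul' c H := by
    ext v
    simp only [gdiv, Pi.smul_apply, smul_eq_mul, RingHom.id_apply, ← mul_ite_zero,
      ← Finset.mul_sum, mul_sub]

theorem forall_sum_mul_le_tvJ_iff {p : V → ℝ} :
    (∀ g, ∑ v, g v * p v ≤ tvJ E g) ↔ p ∈ gdiv E '' Set.Icc (-1) 1 := by
  constructor
  · intro hp
    by_contra hnot
    have hconv : Convex ℝ (gdiv E '' Set.Icc (-1) 1) :=
      (convex_Icc (-1) 1).linear_image (gdivₗ E)
    have hclosed : IsClosed (gdiv E '' Set.Icc (-1) 1) :=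
      (isCompact_Icc.image (gdivₗ E).continuous_of_finiteDimensional).isClosed
    obtain ⟨f, r, hf, hfp⟩ := geometric_hahn_banach_closed_point hconv hclosed hnot
    set g : V → ℝ := fun v => f (Pi.single v 1)
    have hfg : ∀ q, f q = ∑ v, g v * q v := fun q => by
      rw [← f.coe_coe, LinearMap.pi_apply_eq_sum_univ]
      refine Finset.sum_congr rfl fun v _ => ?_
      have : (fun j => if v = j then (1 : ℝ) else 0) = Pi.single v 1 := by
        ext j
        simp [Pi.single_apply, eq_comm]
      rw [this, smul_eq_mul, mul_comm]
      rfl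
    have hsign : ∑ v, g v * gdiv E (fun e => SignType.sign (g e.2 - g e.1)) v = tvJ E g := by
      simp [sum_mul_gdiv, tvJ]
    have := hf _ ⟨_, sign_comp_mem_Icc fun e => g e.2 - g e.1, rfl⟩
    rw [hfg, hsign] at this
    rw [hfg] at hfp
    linarith [hp g]
  · rintro ⟨H, hH, rfl⟩ g
    rw [sum_mul_gdiv, tvJ]
    exact Finset.sum_le_sum fun e _ => mul_le_abs_of_mem_Icc ⟨hH.1 e, hH.2 e⟩ _

end Subdifferential

def IsSubgradientField {V : Type*} (E : Finset (V × V)) (u : V → ℝ) (H : V × V → ℝ) : Prop :=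
  H ∈ Set.Icc (-1) 1 ∧ ∀ e ∈ E, H e * (u e.2 - u e.1) = |u e.2 - u e.1|

theorem IsSubgradientField.add_smul_single {V : Type*} [DecidableEq V] {E : Finset (V × V)}
    {u : V → ℝ} {G H : V × V → ℝ} (hG : IsSubgradientField E u G)
    (hH : IsSubgradientField E u H) (e : V × V) {t : ℝ} (ht : t ∈ Set.Icc (0 : ℝ) 1) :
    IsSubgradientField E u (G + t • Pi.single e (H e - G e)) := by
  have hval : ∀ e', (G + t • Pi.single e (H e - G e) : V × V → ℝ) e' =
      if e' = e then (1 - t) * G e + t * H e else G e' := fun e' => by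
    rcases eq_or_ne e' e with rfl | hne
    · simp only [Pi.add_apply, Pi.smul_apply, Pi.single_eq_same, smul_eq_mul, if_true]
      ring
    · simp [hne]
  obtain ⟨hGbox, hGcal⟩ := hG
  obtain ⟨hHbox, hHcal⟩ := hH
  refine ⟨?_, fun e' he' => ?_⟩
  · rw [← Set.pi_univ_Icc, Set.mem_univ_pi] at hGbox hHbox ⊢
    intro e'
    rw [hval]
    split_ifs
    · obtain ⟨hG₁, hG₂⟩ := hGbox e
      obtain ⟨hH₁, hH₂⟩ := hHbox e
      simp only [Pi.neg_apply, Pi.one_apply] at hG₁ hG₂ hH₁ hH₂ ⊢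
      constructor <;> nlinarith [ht.1, ht.2]
    · exact hGbox e'
  · rw [hval]
    split_ifs with h
    · subst h
      linear_combination (1 - t) * hGcal e' he' + t * hHcal e' he'
    · exact hGcal e' he'

section Fields

variable {V : Type*} [Fintype V] [DecidableEq V] (E : Finset (V × V))

theorem mem_subdiffJ_iff_exists_field {u p : V → ℝ} :
    p ∈ subdiffJ E u ↔ ∃ H, IsSubgradientField E u H ∧ gdiv E H = p := by
  rw [mem_subdiffJ_iff, forall_sum_mul_le_tvJ_iff]
  constructor
  · rintro ⟨⟨H, hH, rfl⟩, hu⟩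
    refine ⟨H, ⟨hH, ?_⟩, rfl⟩
    rw [sum_mul_gdiv, tvJ] at hu
    exact (Finset.sum_eq_sum_iff_of_le fun e _ => mul_le_abs_of_mem_Icc ⟨hH.1 e, hH.2 e⟩ _).1 hu
  · rintro ⟨H, ⟨hH, hcal⟩, rfl⟩
    exact ⟨⟨H, hH, rfl⟩, by rw [sum_mul_gdiv, tvJ]; exact Finset.sum_congr rfl hcal⟩

theorem subdiffJ_nonempty (u : V → ℝ) : (subdiffJ E u).Nonempty :=
  ⟨_, (mem_subdiffJ_iff_exists_field E).2
    ⟨_, ⟨sign_comp_mem_Icc fun e => u e.2 - u e.1, fun _ _ => sign_mul_self _⟩, rfl⟩⟩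

theorem isCompact_subdiffJ (u : V → ℝ) : IsCompact (subdiffJ E u) :=
  (isCompact_Icc.image (gdivₗ E).continuous_of_finiteDimensional).of_isClosed_subset
    (isClosed_subdiffJ E u) fun _ hp => (forall_sum_mul_le_tvJ_iff E).1 ((mem_subdiffJ_iff E).1 hp).1

theorem IsSubgradientField.sub_mul_sub_nonneg_of_isMinOn {E : Finset (V × V)} {u a : V → ℝ}
    {G H : V × V → ℝ} (hG : IsSubgradientField E u G) (hH : IsSubgradientField E u H)
    (hmin : IsMinOn (fun x : V → ℝ => ∑ v, (x v - a v) ^ 2) (subdiffJ E u) (gdiv E G))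
    {e : V × V} (he : e ∈ E) :
    0 ≤ (H e - G e) * ((gdiv E G e.2 - a e.2) - (gdiv E G e.1 - a e.1)) := by
  set w := gdiv E (Pi.single e (H e - G e))
  rw [← sum_mul_gdiv_single E (fun v => gdiv E G v - a v) he]
  refine sum_mul_nonneg_of_forall_sum_sq_le _ w fun t ht => ?_
  have hmem : gdiv E G + t • w ∈ subdiffJ E u := by
    refine (mem_subdiffJ_iff_exists_field E).2 ⟨_, hG.add_smul_single hH e ht, ?_⟩
    change gdivₗ E (G + t • _) = gdivₗ E G + t • gdivₗ E _
    rw [map_add, map_smul]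
  refine (hmin hmem).trans_eq (Finset.sum_congr rfl fun v _ => ?_)
  simp only [Pi.add_apply, Pi.smul_apply, smul_eq_mul]
  ring

end Fields

theorem subdiff_invariant_phi_minimal_general
    {V : Type*} [Fintype V] (E : Finset (V × V))
    (u : V → ℝ) :
    ∀ a : V → ℝ, ∃ xa ∈ subdiffJ E u, ∀ x ∈ subdiffJ E u,
      ∀ φ : ℝ → ℝ, ConvexOn ℝ Set.univ φ →
        ∑ v, φ (xa v - a v) ≤ ∑ v, φ (x v - a v) := by
  classical
  intro a
  obtain ⟨xa, hxa, hmin⟩ := (isCompact_subdiffJ E u).exists_isMinOn (subdiffJ_nonempty E u)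
    (by fun_prop : Continuous fun x : V → ℝ => ∑ v, (x v - a v) ^ 2).continuousOn
  refine ⟨xa, hxa, fun x hx φ hφ => ?_⟩
  obtain ⟨G, hG, rfl⟩ := (mem_subdiffJ_iff_exists_field E).1 hxa
  obtain ⟨H, hH, rfl⟩ := (mem_subdiffJ_iff_exists_field E).1 hx
  set ψ := fun s => derivWithin φ (Set.Ioi s) s
  set z := fun v => gdiv E G v - a v
  have hψ : Monotone ψ := by simpa using hφ.monotoneOn_rightDeriv
  have hpair : 0 ≤ ∑ v, ψ (z v) * (gdiv E H v - gdiv E G v) := by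
    rw [sum_mul_gdiv_sub]
    exact Finset.sum_nonneg fun e he =>
      hψ.mul_sub_nonneg (hG.sub_mul_sub_nonneg_of_isMinOn hH hmin he)
  calc ∑ v, φ (z v) ≤ ∑ v, (φ (z v) + ψ (z v) * ((gdiv E H v - a v) - z v)) := by
        simp only [z, sub_sub_sub_cancel_right, Finset.sum_add_distrib]
        linarith
    _ ≤ ∑ v, φ (gdiv E H v - a v) :=
        Finset.sum_le_sum fun v _ => hφ.add_rightDeriv_mul_sub_le _ _

/-- for every `u ∈ ℝ^V`, the subdifferential `∂J(u)` is an invariant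
φ-minimal subset of `ℝ^V`. -/
theorem subdiff_invariant_phi_minimal
    {V : Type*} [Fintype V] [DecidableEq V] [Nonempty V] (E : Finset (V × V))
    (hE : ∀ v w : V, (v, w) ∈ E → (w, v) ∉ E)
    (hconn : (SimpleGraph.fromRel (fun v w : V => (v, w) ∈ E)).Connected)
    (u : V → ℝ) :
    ∀ a : V → ℝ, ∃ xa ∈ subdiffJ E u, ∀ x ∈ subdiffJ E u,
      ∀ φ : ℝ → ℝ, ConvexOn ℝ Set.univ φ →
        ∑ v, φ (xa v - a v) ≤ ∑ v, φ (x v - a v) :=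
  subdiff_invariant_phi_minimal_general E u
end
end

section
/- If u is a TV flow solution with datum f ∈ ℝ^V, then a stationary solution is reached in finite time: there exists T ≥ 0 such that for all t ≥ T and all v ∈ V, u(t)(v) = (1/|V|) Σ_{w∈V} f(w). -/
/-! The mean `m` of the datum is conserved: testing `-u' ∈ ∂J(u)` against `u ± 1` gives
`∑ u' = 0`. Testing it against the constant `m` gives `⟨u - m, u'⟩ ≤ -J(u)`, and a Poincaré
inequality `c ‖w‖₂ ≤ J(w)` for mean-zero `w` (compactness of the unit sphere; on a connected graph
`J` vanishes only on constants) turns this into `d/dt ‖u - m‖₂ ≤ -c` as long as `u ≠ m`. Being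
Lipschitz, `‖u - m‖₂` is absolutely continuous, so it is nonincreasing and vanishes from time
`‖f - m‖₂ / c` on. -/

open Finset MeasureTheory

noncomputable section

open Set Filter Topology
open scoped NNReal RealInnerProductSpace

theorem AbsolutelyContinuousOnInterval.sub_le_mul_of_ae_deriv_le {g : ℝ → ℝ} {a b C : ℝ}
    (hg : AbsolutelyContinuousOnInterval g a b) (hab : a ≤ b)
    (hC : ∀ᵐ t, t ∈ Ioo a b → deriv g t ≤ C) : g b - g a ≤ C * (b - a) := by
  have hC' : deriv g ≤ᵐ[volume.restrict (Icc a b)] fun _ => C := by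
    rw [Measure.restrict_congr_set Ioo_ae_eq_Icc.symm]
    exact (ae_restrict_iff' measurableSet_Ioo).2 hC
  calc g b - g a = ∫ t in a..b, deriv g t := hg.integral_deriv_eq_sub.symm
    _ ≤ ∫ _ in a..b, C := intervalIntegral.integral_mono_ae_restrict hab
        hg.intervalIntegrable_deriv intervalIntegrable_const hC'
    _ = C * (b - a) := by simp [mul_comm]

theorem LipschitzOnWith.eq_zero_of_deriv_le_neg {g : ℝ → ℝ} {K : ℝ≥0} {c : ℝ}
    (hg : LipschitzOnWith K g (Ici 0)) (hc : 0 < c) (hnonneg : ∀ t, 0 ≤ t → 0 ≤ g t)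
    (hderiv : ∀ᵐ t, 0 < t → 0 < g t → deriv g t ≤ -c) {t : ℝ} (ht : g 0 / c ≤ t) :
    g t = 0 := by
  have hac : ∀ {s t : ℝ}, 0 ≤ s → s ≤ t → AbsolutelyContinuousOnInterval g s t :=
    fun hs hst => (hg.mono (by rw [uIcc_of_le hst]; exact Icc_subset_Ici_iff hst |>.2 hs))
      |>.absolutelyContinuousOnInterval
  -- at a zero of `g` there is a local minimum, so `deriv g = 0` there, differentiable or not
  have hderiv_nonpos : ∀ᵐ t, 0 < t → deriv g t ≤ 0 := by
    filter_upwards [hderiv] with t ht htpos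
    rcases (hnonneg t htpos.le).lt_or_eq with hpos | hzero
    · linarith [ht htpos hpos]
    · have hmin : IsLocalMin g t :=
        Filter.mem_of_superset (Ici_mem_nhds htpos) fun s hs => hzero ▸ hnonneg s hs
      exact hmin.deriv_eq_zero.le
  have hanti : AntitoneOn g (Ici 0) := by
    intro s hs t _ hst
    have := (hac hs hst).sub_le_mul_of_ae_deriv_le hst (by
      filter_upwards [hderiv_nonpos] with r hr hrst using hr (lt_of_le_of_lt hs hrst.1))
    linarith
  set T := g 0 / c
  have hT : 0 ≤ T := div_nonneg (hnonneg 0 le_rfl) hc.le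
  have hgT : g T = 0 := by
    by_contra hne
    have hpos : ∀ s ∈ Icc 0 T, 0 < g s := fun s hs =>
      ((hnonneg T hT).lt_of_ne (Ne.symm hne)).trans_le (hanti hs.1 hT hs.2)
    have hdrop := (hac le_rfl hT).sub_le_mul_of_ae_deriv_le hT (by
      filter_upwards [hderiv] with r hr hr0T using hr hr0T.1 (hpos r (Ioo_subset_Icc_self hr0T)))
    have hcT : c * T = g 0 := mul_div_cancel₀ _ hc.ne'
    linarith [hpos T ⟨hT, le_rfl⟩]
  exact le_antisymm (hgT ▸ hanti hT (hT.trans ht) ht) (hnonneg t (hT.trans ht))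

theorem HasDerivAt.norm {F : Type*} [NormedAddCommGroup F] [InnerProductSpace ℝ F]
    {γ : ℝ → F} {γ' : F} {t : ℝ} (h : HasDerivAt γ γ' t) (h0 : γ t ≠ 0) :
    HasDerivAt (fun s => ‖γ s‖) (⟪γ t, γ'⟫ / ‖γ t‖) t := by
  have := h.norm_sq.sqrt (by positivity)
  simp only [Real.sqrt_sq (norm_nonneg _)] at this
  convert this using 1
  field_simp

theorem SimpleGraph.Preconnected.apply_eq_of_forall_adj {V α : Type*} {G : SimpleGraph V}
    (hG : G.Preconnected) {x : V → α} (h : ∀ i j, G.Adj i j → x i = x j) (i j : V) :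
    x i = x j := by
  obtain ⟨p⟩ := hG i j
  induction p with
  | nil => rfl
  | cons hA _ ih => exact (h _ _ hA).trans ih

section TotalVariation

variable {V : Type*} (E : Finset (V × V))

theorem tvJ_nonneg (w : V → ℝ) : 0 ≤ tvJ E w :=
  sum_nonneg fun _ _ => abs_nonneg _

theorem tvJ_sub_const (w : V → ℝ) (a : ℝ) : tvJ E (w - fun _ => a) = tvJ E w := by
  simp [tvJ]

theorem tvJ_smul_s14 (r : ℝ) (w : V → ℝ) : tvJ E (r • w) = |r| * tvJ E w := by
  simp [tvJ, mul_sum, ← mul_sub, abs_mul]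

theorem continuous_tvJ : Continuous (tvJ E) := by
  unfold tvJ
  fun_prop

theorem apply_eq_of_tvJ_eq_zero
    (hconn : (SimpleGraph.fromRel fun v w : V => (v, w) ∈ E).Connected)
    {w : V → ℝ} (hw : tvJ E w = 0) (i j : V) : w i = w j := by
  have hedge : ∀ e ∈ E, w e.2 = w e.1 := fun e he => by
    have := (sum_eq_zero_iff_of_nonneg fun e _ => abs_nonneg (w e.2 - w e.1)).1 hw e he
    rwa [abs_eq_zero, sub_eq_zero] at this
  refine hconn.preconnected.apply_eq_of_forall_adj (fun a b hab => ?_) i j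
  rcases ((SimpleGraph.fromRel_adj _ _ _).1 hab).2 with h | h
  · exact (hedge _ h).symm
  · exact hedge _ h

theorem eq_zero_of_tvJ_eq_zero_of_sum_eq_zero [Fintype V] [Nonempty V]
    (hconn : (SimpleGraph.fromRel fun v w : V => (v, w) ∈ E).Connected)
    {w : V → ℝ} (hJ : tvJ E w = 0) (hsum : ∑ v, w v = 0) : w = 0 := by
  funext i
  have : ∑ v, w v = Fintype.card V • w i := by
    rw [sum_congr rfl fun v _ => apply_eq_of_tvJ_eq_zero E hconn hJ v i, sum_const, card_univ]
  rw [hsum, nsmul_eq_mul, eq_comm, mul_eq_zero] at this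
  exact this.resolve_left (Nat.cast_ne_zero.2 Fintype.card_ne_zero)

theorem exists_pos_mul_norm_le_tvJ_add_abs_sum [Fintype V] [Nonempty V]
    (hconn : (SimpleGraph.fromRel fun v w : V => (v, w) ∈ E).Connected) :
    ∃ c > 0, ∀ w : V → ℝ, c * ‖WithLp.toLp 2 w‖ ≤ tvJ E w + |∑ v, w v| := by
  set φ : EuclideanSpace ℝ V → ℝ := fun x => tvJ E x.ofLp + |∑ v, x v|
  have hφ_smul : ∀ (r : ℝ) x, φ (r • x) = |r| * φ x := fun r x => by
    simp [φ, ← mul_sum, tvJ_smul_s14, abs_mul, mul_add]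
  have hφ_pos : ∀ x ≠ 0, 0 < φ x := by
    intro x hx
    by_contra! hφ
    have hJ_nonneg := tvJ_nonneg E x.ofLp
    have hsum_nonneg := abs_nonneg (∑ v, x v)
    have hJ : tvJ E x.ofLp = 0 := by linarith
    have hsum : ∑ v, x v = 0 := abs_eq_zero.1 (by linarith)
    exact hx (WithLp.ofLp_injective 2 (eq_zero_of_tvJ_eq_zero_of_sum_eq_zero E hconn hJ hsum))
  have hφ_cont : Continuous φ :=
    ((continuous_tvJ E).comp (PiLp.continuous_ofLp 2 _)).add
      (continuous_finsetSum _ fun v _ => (continuous_apply v).comp (PiLp.continuous_ofLp 2 _)).abs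
  obtain ⟨x₀, hx₀, hmin⟩ := (isCompact_sphere (0 : EuclideanSpace ℝ V) 1).exists_isMinOn
    (NormedSpace.sphere_nonempty.2 zero_le_one) hφ_cont.continuousOn
  refine ⟨φ x₀, hφ_pos x₀ (ne_zero_of_mem_unit_sphere ⟨x₀, hx₀⟩), fun w => ?_⟩
  set x := WithLp.toLp 2 w
  rcases eq_or_ne x 0 with hx | hx
  · rw [hx, norm_zero, mul_zero]
    exact add_nonneg (tvJ_nonneg E w) (abs_nonneg _)
  · have hx' : 0 < ‖x‖ := norm_pos_iff.2 hx
    have := hmin (a := ‖x‖⁻¹ • x) (by simp [norm_smul, hx'.ne'])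
    rw [Set.mem_ofPred_eq, hφ_smul, abs_of_pos (inv_pos.2 hx'), le_inv_mul_iff₀ hx'] at this
    rwa [mul_comm] at this

theorem sum_eq_zero_of_mem_subdiffJ [Fintype V] {w ws : V → ℝ} (h : ws ∈ subdiffJ E w) :
    ∑ v, ws v = 0 := by
  have h₁ := h (w - fun _ => 1)
  have h₂ := h (w - fun _ => -1)
  simp only [tvJ_sub_const, Pi.sub_apply, sub_sub_cancel_left, neg_mul, one_mul, sum_neg_distrib,
    neg_neg] at h₁ h₂
  linarith

theorem tvJ_le_sum_sub_mul_of_mem_subdiffJ [Fintype V] {w ws : V → ℝ} (h : ws ∈ subdiffJ E w)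
    (a : ℝ) : tvJ E w ≤ ∑ v, (w v - a) * ws v := by
  have h_const := h fun _ => a
  rw [show tvJ E (fun _ => a) = 0 by simp [tvJ]] at h_const
  have hswap : ∑ v, (a - w v) * ws v = -∑ v, (w v - a) * ws v := by
    rw [← sum_neg_distrib]; exact sum_congr rfl fun v _ => by ring
  linarith

theorem deriv_dist_toLp_const_le [Fintype V] {u : ℝ → V → ℝ} {u't : V → ℝ} {t a : ℝ}
    (hd : HasDerivAt u u't t) (hsub : (fun v => -u't v) ∈ subdiffJ E (u t))
    (hpos : 0 < dist (WithLp.toLp 2 (u t)) (WithLp.toLp 2 fun _ => a)) :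
    deriv (fun s => dist (WithLp.toLp 2 (u s)) (WithLp.toLp 2 fun _ : V => a)) t ≤
      -tvJ E (u t) / dist (WithLp.toLp 2 (u t)) (WithLp.toLp 2 fun _ => a) := by
  set p : EuclideanSpace ℝ V := WithLp.toLp 2 fun _ => a
  have hγ : HasDerivAt (fun s => WithLp.toLp 2 (u s) - p) (WithLp.toLp 2 u't) t := by
    have := (PiLp.continuousLinearEquiv 2 ℝ fun _ : V => ℝ).symm.hasFDerivAt.comp_hasDerivAt t hd
    simpa using this.sub_const p
  have hinner : ⟪WithLp.toLp 2 (u t) - p, WithLp.toLp 2 u't⟫ ≤ -tvJ E (u t) := by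
    have := tvJ_le_sum_sub_mul_of_mem_subdiffJ E hsub a
    simp only [mul_neg, sum_neg_distrib] at this
    simpa [PiLp.inner_apply, p, mul_comm, le_neg] using this
  simp only [dist_eq_norm] at hpos ⊢
  rw [(hγ.norm (norm_pos_iff.1 hpos)).deriv]
  gcongr

end TotalVariation

namespace IsTVFlowSolution

variable {V : Type*} [Fintype V] {E : Finset (V × V)} {f : V → ℝ} {u : ℝ → V → ℝ}

theorem sum_apply_eq (hu : IsTVFlowSolution E f u) {t : ℝ} (ht : 0 ≤ t) :
    ∑ v, u t v = ∑ v, f v := by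
  obtain ⟨hu0, ⟨L, hL⟩, u', hu'⟩ := hu
  let S : (V → ℝ) →L[ℝ] ℝ := ∑ v, ContinuousLinearMap.proj v
  have hS : ∀ w, S w = ∑ v, w v := fun w => by simp [S]
  have hac : AbsolutelyContinuousOnInterval (S ∘ u) 0 t :=
    (S.lipschitz.comp_lipschitzOnWith
      (hL.mono (by rw [uIcc_of_le ht]; exact Icc_subset_Ici_self))).absolutelyContinuousOnInterval
  have hderiv : ∀ᵐ s, s ∈ uIcc 0 t → HasDerivAt (S ∘ u) 0 s := by
    filter_upwards [hu', Measure.ae_ne volume 0] with s hs hs0 hst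
    obtain ⟨hd, hsub⟩ := hs (lt_of_le_of_ne (uIcc_of_le ht ▸ hst).1 hs0.symm)
    have hsum := sum_eq_zero_of_mem_subdiffJ E hsub
    rw [sum_neg_distrib, neg_eq_zero, ← hS] at hsum
    simpa [hsum] using S.hasFDerivAt.comp_hasDerivAt s hd
  obtain ⟨C, hC⟩ := hac.const_of_ae_hasDerivAt_zero hderiv
  simpa [hS, hu0] using (hC t right_mem_uIcc).trans (hC 0 left_mem_uIcc).symm

end IsTVFlowSolution

theorem tvflow_reaches_mean_in_finite_time_general
    {V : Type*} [Fintype V] [Nonempty V] (E : Finset (V × V))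
    (hconn : (SimpleGraph.fromRel (fun v w : V => (v, w) ∈ E)).Connected)
    (f : V → ℝ) (u : ℝ → V → ℝ) (hu : IsTVFlowSolution E f u) :
    ∃ T : ℝ, 0 ≤ T ∧ ∀ t : ℝ, T ≤ t →
      ∀ v : V, u t v = (1 / (Fintype.card V : ℝ)) * ∑ w, f w := by
  obtain ⟨c, hc, hpoincare⟩ := exists_pos_mul_norm_le_tvJ_add_abs_sum E hconn
  set m := (1 / (Fintype.card V : ℝ)) * ∑ w, f w with hm
  set F : ℝ → ℝ := fun s => dist (WithLp.toLp 2 (u s)) (WithLp.toLp 2 fun _ => m)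
  have hmean : ∀ s, 0 ≤ s → ∑ v, (u s v - m) = 0 := fun s hs => by
    rw [sum_sub_distrib, hu.sum_apply_eq hs, sum_const, card_univ, nsmul_eq_mul, hm,
      one_div, mul_inv_cancel_left₀ (Nat.cast_ne_zero.2 Fintype.card_ne_zero), sub_self]
  obtain ⟨-, ⟨L, hL⟩, u', hu'⟩ := hu
  have hF_lip : LipschitzOnWith _ F (Ici 0) :=
    (LipschitzWith.dist_left _).comp_lipschitzOnWith
      ((PiLp.lipschitzWith_toLp 2 _).comp_lipschitzOnWith hL)
  have hF_deriv : ∀ᵐ s, 0 < s → 0 < F s → deriv F s ≤ -c := by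
    filter_upwards [hu'] with s hs hs0 hFs
    obtain ⟨hd, hsub⟩ := hs hs0
    have hJ : c * F s ≤ tvJ E (u s) := by
      have := hpoincare (u s - fun _ => m)
      rw [tvJ_sub_const, WithLp.toLp_sub, ← dist_eq_norm] at this
      simpa only [Pi.sub_apply, hmean s hs0.le, abs_zero, add_zero] using this
    calc deriv F s ≤ -tvJ E (u s) / F s := deriv_dist_toLp_const_le E hd hsub hFs
      _ ≤ -c := by rw [div_le_iff₀ hFs]; linarith
  refine ⟨F 0 / c, by positivity, fun t ht v => ?_⟩
  have hFt := hF_lip.eq_zero_of_deriv_le_neg hc (fun _ _ => dist_nonneg) hF_deriv ht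
  exact congr_fun (WithLp.toLp_injective 2 (dist_eq_zero.1 hFt)) v

/-- a TV flow solution reaches the mean of the datum in finite time. -/
theorem tvflow_reaches_mean_in_finite_time
    {V : Type*} [Fintype V] [DecidableEq V] [Nonempty V] (E : Finset (V × V))
    (hE : ∀ v w : V, (v, w) ∈ E → (w, v) ∉ E)
    (hconn : (SimpleGraph.fromRel (fun v w : V => (v, w) ∈ E)).Connected)
    (f : V → ℝ) (u : ℝ → V → ℝ) (hu : IsTVFlowSolution E f u) :
    ∃ T : ℝ, 0 ≤ T ∧ ∀ t : ℝ, T ≤ t →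
      ∀ v : V, u t v = (1 / (Fintype.card V : ℝ)) * ∑ w, f w :=
  tvflow_reaches_mean_in_finite_time_general E hconn f u hu
end
end
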